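/- arXiv:2303.11576 — 3 statements merged into one kernel-verified Lean document; each statement's English description precedes it below -/
import Mathlib

section
/- Suppose Assumption 4.4 holds. Then for every bounded continuous f : X → ℝ and every x = (y,i) ∈ X, the map (t,T) ↦ ψ_f(x,t,T) is jointly continuous on D_ψ := {(t,T) ∈ [0,∞)² : t ≤ T}, where ψ_f((y,i),t,T) := λ(S_i(t,y)) e^{−Λ(y,i,t)} ∫_Y Σ_{j∈I} π_{ij}(u) e^{−Λ(u,j,T−t)} f(S_j(T−t,u),j) J(S_i(t,y),du). -/
open MeasureTheory ProbabilityTheory Real Set Filter Topology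

noncomputable section

/-- The operator `f ↦ (x ↦ ∫ f dκ(x))` iterated `n` times. -/
def kernelOpIter {Z : Type*} [MeasurableSpace Z] (κ : Kernel Z Z) :
    ℕ → (Z → ℝ) → Z → ℝ
  | 0, f => f
  | n + 1, f => fun z => ∫ w, kernelOpIter κ n f w ∂(κ z)

/-- The `n`-fold iterate of a kernel (`n = 0` giving the identity kernel). -/
def kIter {Z : Type*} [MeasurableSpace Z] (κ : Kernel Z Z) : ℕ → Kernel Z Z
  | 0 => Kernel.id
  | n + 1 => κ ∘ₖ kIter κ n

/-- `Λ(y,i,t) = ∫₀ᵗ λ(S_i(h,y)) dh`. -/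
def cumInt {Y I : Type*} (S : I → ℝ → Y → Y) (lam : Y → ℝ) (y : Y) (i : I) (t : ℝ) : ℝ :=
  ∫ h in (0:ℝ)..t, lam (S i h y)

/-- `G((y,i),A) = ∫₀^∞ λ(S_i(t,y)) e^{−Λ(y,i,t)} 1_A(S_i(t,y),i) dt`. -/
def Gker {Y I : Type*} (S : I → ℝ → Y → Y) (lam : Y → ℝ)
    (x : Y × I) (A : Set (Y × I)) : ℝ :=
  ∫ t in Ioi (0:ℝ), lam (S x.2 t x.1) * exp (-(cumInt S lam x.1 x.2 t)) *
    A.indicator (fun _ => (1:ℝ)) (S x.2 t x.1, x.2)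

/-- `G̃((y,i),A) = ∫₀^∞ e^{−Λ(y,i,t)} 1_A(S_i(t,y),i) dt`. -/
def Gtil {Y I : Type*} (S : I → ℝ → Y → Y) (lam : Y → ℝ)
    (x : Y × I) (A : Set (Y × I)) : ℝ :=
  ∫ t in Ioi (0:ℝ), exp (-(cumInt S lam x.1 x.2 t)) *
    A.indicator (fun _ => (1:ℝ)) (S x.2 t x.1, x.2)

/-- `W((y,i),A) = ∫_Y Σ_j π_{ij}(u) 1_A(u,j) J(y,du)`. -/
def Wker {Y I : Type*} [MeasurableSpace Y] [Fintype I]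
    (pm : I → I → Y → ℝ) (J : Kernel Y Y) (x : Y × I) (A : Set (Y × I)) : ℝ :=
  ∫ u, ∑ j, pm x.2 j u * A.indicator (fun _ => (1:ℝ)) (u, j) ∂(J x.1)

/-- `W̃((y,i),A) = λ(y)·W((y,i),A)`. -/
def Wtil {Y I : Type*} [MeasurableSpace Y] [Fintype I] (lam : Y → ℝ)
    (pm : I → I → Y → ℝ) (J : Kernel Y Y) (x : Y × I) (A : Set (Y × I)) : ℝ :=
  lam x.1 * Wker pm J x A

/-- `P((y,i),A) = ∫₀^∞ λ(S_i(t,y)) e^{−Λ(y,i,t)} W((S_i(t,y),i),A) dt`. -/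
def Pker {Y I : Type*} [MeasurableSpace Y] [Fintype I] (S : I → ℝ → Y → Y) (lam : Y → ℝ)
    (pm : I → I → Y → ℝ) (J : Kernel Y Y) (x : Y × I) (A : Set (Y × I)) : ℝ :=
  ∫ t in Ioi (0:ℝ), lam (S x.2 t x.1) * exp (-(cumInt S lam x.1 x.2 t)) *
    Wker pm J (S x.2 t x.1, x.2) A

/-- `P_T f(x) = Σ_{n=0}^∞ P̄ⁿ(g_T · (P̄ h_T))((x,0))`. -/
def PTf {Y I : Type*} [MeasurableSpace Y] [MeasurableSpace I] (S : I → ℝ → Y → Y)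
    (Pbar : Kernel (Y × I × ℝ) (Y × I × ℝ)) (f : Y × I → ℝ) (T : ℝ) (x : Y × I) : ℝ :=
  ∑' n : ℕ, kernelOpIter Pbar n
    (fun z => (Icc (0:ℝ) T).indicator (fun _ => (1:ℝ)) z.2.2 *
        f (S z.2.1 (T - z.2.2) z.1, z.2.1) *
        ∫ w, (Ioi T).indicator (fun _ => (1:ℝ)) w.2.2 ∂(Pbar z))
    (x.1, x.2, 0)

/-- `ψ_f((y,i),t,T)`. -/
def psiF {Y I : Type*} [MeasurableSpace Y] [Fintype I] (S : I → ℝ → Y → Y) (lam : Y → ℝ)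
    (pm : I → I → Y → ℝ) (J : Kernel Y Y) (f : Y × I → ℝ) (x : Y × I) (t T : ℝ) : ℝ :=
  lam (S x.2 t x.1) * exp (-(cumInt S lam x.1 x.2 t)) *
    ∫ u, ∑ j, pm x.2 j u * exp (-(cumInt S lam u j (T - t))) * f (S j (T - t) u, j)
      ∂(J (S x.2 t x.1))

/-- The operator `G` acting on functions. -/
def Gop {Y I : Type*} (S : I → ℝ → Y → Y) (lam : Y → ℝ) (f : Y × I → ℝ) (x : Y × I) : ℝ :=
  ∫ t in Ioi (0:ℝ), lam (S x.2 t x.1) * exp (-(cumInt S lam x.1 x.2 t)) * f (S x.2 t x.1, x.2)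

/-- The operator `W` acting on functions. -/
def Wop {Y I : Type*} [MeasurableSpace Y] [Fintype I]
    (pm : I → I → Y → ℝ) (J : Kernel Y Y) (f : Y × I → ℝ) (x : Y × I) : ℝ :=
  ∫ u, ∑ j, pm x.2 j u * f (u, j) ∂(J x.1)

/-- Invariance of a measure for the semigroup `{P_T}`. -/
def isInvariantSemigroup {Y I : Type*} [MeasurableSpace Y] [MeasurableSpace I]
    (S : I → ℝ → Y → Y) (Pbar : Kernel (Y × I × ℝ) (Y × I × ℝ))
    (μ : Measure (Y × I)) : Prop :=
  ∀ T ≥ (0:ℝ), ∀ A : Set (Y × I), MeasurableSet A →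
    ∫ x, PTf S Pbar (A.indicator fun _ => (1:ℝ)) T x ∂μ = (μ A).toReal

/-- Invariance of a measure for the kernel `P`. -/
def isInvariantP {Y I : Type*} [MeasurableSpace Y] [MeasurableSpace I] [Fintype I] (S : I → ℝ → Y → Y)
    (lam : Y → ℝ) (pm : I → I → Y → ℝ) (J : Kernel Y Y) (μ : Measure (Y × I)) : Prop :=
  ∀ A : Set (Y × I), MeasurableSet A → ∫ x, Pker S lam pm J x A ∂μ = (μ A).toReal

/-!
For `s ≥ 0` the integrand `(u, s) ↦ Σ_j π_{ij}(u) e^{−Λ(u,j,s)} f(S_j(s,u), j)` is continuous,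
and bounded by `|I| · sup |f|` because `Λ ≥ 0`. Assumption 4.4 therefore makes
`(v, s) ↦ ∫ integrand(u, s) J(v, du)` jointly continuous on `Y × [0,∞)`, and `ψ_f((y,i),t,T)` is
this map at `(S_i(t,y), T − t)` times the continuous factor `λ(S_i(t,y)) e^{−Λ(y,i,t)}`.
-/

/-- Assumption 4.4. -/
def JointlyContinuousIntegrals {Y : Type*} [TopologicalSpace Y] [MeasurableSpace Y]
    (J : Kernel Y Y) : Prop :=
  ∀ g : Y × ℝ → ℝ, (∃ M, ∀ q, |g q| ≤ M) →
    ContinuousOn g ((univ : Set Y) ×ˢ Ici (0:ℝ)) →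
    ContinuousOn (fun q : Y × ℝ => ∫ u, g (u, q.2) ∂(J q.1)) ((univ : Set Y) ×ˢ Ici (0:ℝ))

theorem JointlyContinuousIntegrals.continuousOn_integral {Y : Type*} [TopologicalSpace Y]
    [MeasurableSpace Y] {J : Kernel Y Y} (hJ : JointlyContinuousIntegrals J)
    {g : Y × ℝ → ℝ} (hg : ContinuousOn g (univ ×ˢ Ici 0)) {M : ℝ}
    (hM : ∀ u, ∀ s ≥ (0:ℝ), |g (u, s)| ≤ M) :
    ContinuousOn (fun q : Y × ℝ => ∫ u, g (u, q.2) ∂(J q.1)) (univ ×ˢ Ici 0) := by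
  have hclamp : Continuous fun q : Y × ℝ => (q.1, max q.2 0) :=
    continuous_fst.prodMk (continuous_snd.max continuous_const)
  refine (hJ (fun q => g (q.1, max q.2 0)) ⟨M, fun q => hM _ _ (le_max_right _ _)⟩
    (hg.comp hclamp.continuousOn fun q _ => ⟨trivial, mem_Ici.2 (le_max_right _ _)⟩)).congr ?_
  rintro ⟨v, s⟩ ⟨-, hs⟩
  simp only [max_eq_left (mem_Ici.1 hs)]

theorem ContinuousOn.continuous_comp_max_zero {Y Z : Type*} [TopologicalSpace Y]
    [TopologicalSpace Z] {F : ℝ × Y → Z} (hF : ContinuousOn F (Ici 0 ×ˢ univ)) :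
    Continuous fun p : ℝ × Y => F (max p.1 0, p.2) :=
  hF.comp_continuous ((continuous_fst.max continuous_const).prodMk continuous_snd)
    fun _ => ⟨mem_Ici.2 (le_max_right _ _), trivial⟩

section FlowIntegrals

variable {Y I : Type*} (S : I → ℝ → Y → Y) (lam : Y → ℝ)

theorem cumInt_nonneg (hlam : ∀ y, 0 ≤ lam y) (y : Y) (i : I) {t : ℝ} (ht : 0 ≤ t) :
    0 ≤ cumInt S lam y i t :=
  intervalIntegral.integral_nonneg ht fun _ _ => hlam _

theorem continuousOn_cumInt [TopologicalSpace Y] {i : I}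
    (hS : ContinuousOn (fun p : ℝ × Y => S i p.1 p.2) (Ici 0 ×ˢ univ)) (hlam : Continuous lam) :
    ContinuousOn (fun q : Y × ℝ => cumInt S lam q.1 i q.2) (univ ×ˢ Ici 0) := by
  have hclamped : Continuous fun q : Y × ℝ => ∫ h in (0:ℝ)..q.2, lam (S i (max h 0) q.1) :=
    intervalIntegral.continuous_parametric_primitive_of_continuous
      (f := fun u h => lam (S i (max h 0) u))
      (hlam.comp (hS.continuous_comp_max_zero.comp continuous_swap))
  refine hclamped.continuousOn.congr ?_
  rintro ⟨u, s⟩ ⟨-, hs⟩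
  refine intervalIntegral.integral_congr fun h hh => ?_
  rw [uIcc_of_le (mem_Ici.1 hs)] at hh
  simp only [max_eq_left hh.1]

variable [Fintype I] (pm : I → I → Y → ℝ) (f : Y × I → ℝ)

def psiIntegrand (i : I) (q : Y × ℝ) : ℝ :=
  ∑ j, pm i j q.1 * exp (-(cumInt S lam q.1 j q.2)) * f (S j q.2 q.1, j)

theorem psiF_eq [MeasurableSpace Y] (J : Kernel Y Y) (y : Y) (i : I) (t T : ℝ) :
    psiF S lam pm J f (y, i) t T = lam (S i t y) * exp (-(cumInt S lam y i t)) *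
      ∫ u, psiIntegrand S lam pm f i (u, T - t) ∂(J (S i t y)) :=
  rfl

theorem abs_psiIntegrand_le (hlam : ∀ y, 0 ≤ lam y) {i : I}
    (hpm : ∀ j u, pm i j u ∈ Icc (0:ℝ) 1) {M : ℝ} (hf : ∀ x, |f x| ≤ M) (u : Y) {s : ℝ}
    (hs : 0 ≤ s) : |psiIntegrand S lam pm f i (u, s)| ≤ Fintype.card I * M := by
  calc _ ≤ ∑ j, |pm i j u * exp (-(cumInt S lam u j s)) * f (S j s u, j)| :=
        Finset.abs_sum_le_sum_abs _ _
    _ ≤ ∑ _j : I, M := Finset.sum_le_sum fun j _ => ?_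
    _ = Fintype.card I * M := by simp
  have hexp : exp (-(cumInt S lam u j s)) ≤ 1 :=
    exp_le_one_iff.2 (neg_nonpos.2 (cumInt_nonneg S lam hlam u j hs))
  rw [abs_mul, abs_mul, abs_of_nonneg (hpm j u).1, abs_of_pos (exp_pos _)]
  calc _ ≤ 1 * 1 * M := by gcongr; exacts [(hpm j u).2, hf _]
    _ = M := by ring

theorem continuousOn_psiIntegrand [TopologicalSpace Y] [TopologicalSpace I] {i : I}
    (hS : ∀ j, ContinuousOn (fun p : ℝ × Y => S j p.1 p.2) (Ici 0 ×ˢ univ))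
    (hlam : Continuous lam) (hpm : ∀ j, Continuous (pm i j)) (hf : Continuous f) :
    ContinuousOn (psiIntegrand S lam pm f i) (univ ×ˢ Ici 0) := by
  refine continuousOn_finsetSum _ fun j _ => ?_
  have hflow : ContinuousOn (fun q : Y × ℝ => S j q.2 q.1) (univ ×ˢ Ici 0) :=
    (hS j).comp continuous_swap.continuousOn fun q hq => ⟨hq.2, trivial⟩
  exact (((hpm j).comp continuous_fst).continuousOn.mul
    (continuous_exp.comp_continuousOn (continuousOn_cumInt S lam (hS j) hlam).neg)).mul
    (hf.comp_continuousOn (hflow.prodMk continuousOn_const))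

end FlowIntegrals

theorem psi_jointly_continuous_general
    {Y : Type*} [MetricSpace Y]
    [MeasurableSpace Y]
    {I : Type*} [Fintype I] [TopologicalSpace I]
    (S : I → ℝ → Y → Y)
    (hS_cont : ∀ i, ContinuousOn (fun p : ℝ × Y => S i p.1 p.2) (Ici (0:ℝ) ×ˢ (univ : Set Y)))
    (lam : Y → ℝ) (hlam_cont : Continuous lam) (lmin lmax : ℝ) (hlmin : 0 < lmin)
    (hlam_bd : ∀ y, lmin ≤ lam y ∧ lam y ≤ lmax)
    (pm : I → I → Y → ℝ) (hpm_cont : ∀ i j, Continuous (pm i j))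
    (hpm_mem : ∀ i j y, pm i j y ∈ Icc (0:ℝ) 1)
    (J : Kernel Y Y)
    (h44 : ∀ g : Y × ℝ → ℝ, (∃ M, ∀ q, |g q| ≤ M) →
      ContinuousOn g ((univ : Set Y) ×ˢ Ici (0:ℝ)) →
      ContinuousOn (fun q : Y × ℝ => ∫ u, g (u, q.2) ∂(J q.1))
        ((univ : Set Y) ×ˢ Ici (0:ℝ)))
    (f : Y × I → ℝ) (hf_cont : Continuous f) (hf_bdd : ∃ M, ∀ x, |f x| ≤ M) :
    ∀ x : Y × I,
      ContinuousOn (fun q : ℝ × ℝ => psiF S lam pm J f x q.1 q.2)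
        {q : ℝ × ℝ | 0 ≤ q.1 ∧ q.1 ≤ q.2} := by
  rintro ⟨y, i⟩
  obtain ⟨M, hM⟩ := hf_bdd
  have hlam_nonneg : ∀ y, 0 ≤ lam y := fun y => hlmin.le.trans (hlam_bd y).1
  have hfst : MapsTo Prod.fst {q : ℝ × ℝ | 0 ≤ q.1 ∧ q.1 ≤ q.2} (Ici 0) := fun _ hq => hq.1
  have horbit : ContinuousOn (fun t => S i t y) (Ici 0) :=
    (hS_cont i).comp (continuous_id.prodMk continuous_const).continuousOn
      fun _ ht => ⟨ht, trivial⟩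
  have hrate : ContinuousOn (fun t => lam (S i t y) * exp (-(cumInt S lam y i t))) (Ici 0) :=
    (hlam_cont.comp_continuousOn horbit).mul (continuous_exp.comp_continuousOn
      ((continuousOn_cumInt S lam (hS_cont i) hlam_cont).comp
        (continuous_const.prodMk continuous_id).continuousOn fun _ ht => ⟨trivial, ht⟩).neg)
  have hintegral := JointlyContinuousIntegrals.continuousOn_integral h44
    (continuousOn_psiIntegrand S lam pm f hS_cont hlam_cont (hpm_cont i) hf_cont)
    (abs_psiIntegrand_le S lam pm f hlam_nonneg (hpm_mem i) hM)
  simp only [psiF_eq]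
  exact (hrate.comp continuous_fst.continuousOn hfst).mul
    (hintegral.comp ((horbit.comp continuous_fst.continuousOn hfst).prodMk
      (continuous_snd.sub continuous_fst).continuousOn) fun _ hq => ⟨trivial, sub_nonneg.2 hq.2⟩)

theorem psi_jointly_continuous
    {Y : Type*} [MetricSpace Y] [TopologicalSpace.SeparableSpace Y] [CompleteSpace Y]
    [MeasurableSpace Y] [BorelSpace Y]
    {I : Type*} [Fintype I] [Nonempty I] [TopologicalSpace I] [DiscreteTopology I]
    [MeasurableSpace I] [MeasurableSingletonClass I]
    (S : I → ℝ → Y → Y)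
    (hS_cont : ∀ i, ContinuousOn (fun p : ℝ × Y => S i p.1 p.2) (Ici (0:ℝ) ×ˢ (univ : Set Y)))
    (hS_zero : ∀ i y, S i 0 y = y)
    (hS_add : ∀ i, ∀ s ≥ (0:ℝ), ∀ t ≥ (0:ℝ), ∀ y, S i (s + t) y = S i s (S i t y))
    (lam : Y → ℝ) (hlam_cont : Continuous lam) (lmin lmax : ℝ) (hlmin : 0 < lmin)
    (hlam_bd : ∀ y, lmin ≤ lam y ∧ lam y ≤ lmax)
    (pm : I → I → Y → ℝ) (hpm_cont : ∀ i j, Continuous (pm i j))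
    (hpm_mem : ∀ i j y, pm i j y ∈ Icc (0:ℝ) 1) (hpm_sum : ∀ i y, ∑ j, pm i j y = 1)
    (J : Kernel Y Y) [IsMarkovKernel J]
    (h44 : ∀ g : Y × ℝ → ℝ, (∃ M, ∀ q, |g q| ≤ M) →
      ContinuousOn g ((univ : Set Y) ×ˢ Ici (0:ℝ)) →
      ContinuousOn (fun q : Y × ℝ => ∫ u, g (u, q.2) ∂(J q.1))
        ((univ : Set Y) ×ˢ Ici (0:ℝ)))
    (f : Y × I → ℝ) (hf_cont : Continuous f) (hf_bdd : ∃ M, ∀ x, |f x| ≤ M) :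
    ∀ x : Y × I,
      ContinuousOn (fun q : ℝ × ℝ => psiF S lam pm J f x q.1 q.2)
        {q : ℝ × ℝ | 0 ≤ q.1 ∧ q.1 ≤ q.2} :=
  psi_jointly_continuous_general S hS_cont lam hlam_cont lmin lmax hlmin hlam_bd pm hpm_cont hpm_mem
    J h44 f hf_cont hf_bdd
end
end

section
/- For every bounded continuous f : X → ℝ: the function Gf is bounded and continuous, the function λ̂·(Gf − f) is bounded and continuous, the difference quotients (Q_T(Gf) − Gf)/T converge pointwise on X to λ̂·(Gf − f) as T → 0+, and there exists δ > 0 with sup_{0<T≤δ} ‖(Q_T(Gf) − Gf)/T‖_∞ < ∞. In particular Gf lies in the domain of the weak generator A_Q of {Q_t}, with A_Q(Gf) = λ̂·(Gf − f), i.e. Gf − A_Q(Gf)/λ̂ = f. -/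
open MeasureTheory ProbabilityTheory Real Set Filter Topology

noncomputable section

/-!
Fix `i` and write `Λ(y, t)` and `H_y(t) = λ(S_i(t,y)) e^{-Λ(y,t)} f(S_i(t,y), i)`, so that
`Gf(y,i) = ∫₀^∞ H_y`. The cocycle identity `Λ(S_i(s,y), t) = Λ(y, t + s) - Λ(y, s)` gives, for
`s ≥ 0`, `Gf(S_i(s,y), i) = e^{Λ(y,s)} (Gf(y,i) - ∫₀ˢ H_y)`. Differentiating the right-hand side,
`d/ds Gf(S_i(s,y), i) = λ(S_i(s,y)) (Gf - f)(S_i(s,y), i)`. This derivative is bounded uniformly,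
because `|Gf| ≤ λ̄ ‖f‖_∞ / λ̲`. The limit of the difference quotients is then its value at `s = 0`,
and the mean value inequality bounds the quotients uniformly in `T > 0`.
-/

/- Freezing a semiflow at negative times makes it jointly continuous on all of `ℝ × Y` without
changing it on `[0, ∞)`, so the fundamental theorem of calculus applies at `t = 0`. -/
def clampFlow {Y : Type*} (ψ : ℝ → Y → Y) (t : ℝ) : Y → Y :=
  ψ (max t 0)

section ClampFlow

variable {Y : Type*} {ψ : ℝ → Y → Y}

theorem clampFlow_of_nonneg {t : ℝ} (ht : 0 ≤ t) : clampFlow ψ t = ψ t := by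
  rw [clampFlow, max_eq_left ht]

theorem clampFlow_zero (hzero : ∀ y, ψ 0 y = y) (y : Y) : clampFlow ψ 0 y = y := by
  rw [clampFlow_of_nonneg le_rfl, hzero]

theorem clampFlow_add (hadd : ∀ s ≥ (0:ℝ), ∀ t ≥ (0:ℝ), ∀ y, ψ (s + t) y = ψ s (ψ t y)) :
    ∀ s ≥ (0:ℝ), ∀ t ≥ (0:ℝ), ∀ y, clampFlow ψ (s + t) y = clampFlow ψ s (clampFlow ψ t y) :=
  fun s hs t ht y => by
    rw [clampFlow_of_nonneg (add_nonneg hs ht), clampFlow_of_nonneg hs, clampFlow_of_nonneg ht,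
      hadd s hs t ht]

theorem continuous_uncurry_clampFlow [TopologicalSpace Y]
    (hψ : ContinuousOn (Function.uncurry ψ) (Ici 0 ×ˢ univ)) :
    Continuous (Function.uncurry (clampFlow ψ)) :=
  hψ.comp_continuous ((continuous_fst.max continuous_const).prodMk continuous_snd)
    fun p => ⟨mem_Ici.2 (le_max_right p.1 0), trivial⟩

end ClampFlow

namespace SemiflowResolvent

variable {Y : Type*}

/- For a single flow `φ = S_i`, `hazard`, `integrand` and `resolvent` are `Λ(·,i,·)`, the integrand
of `G` and `G` itself. -/
def hazard (φ : ℝ → Y → Y) (lam : Y → ℝ) (y : Y) (t : ℝ) : ℝ :=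
  ∫ h in (0:ℝ)..t, lam (φ h y)

def integrand (φ : ℝ → Y → Y) (lam g : Y → ℝ) (y : Y) (t : ℝ) : ℝ :=
  lam (φ t y) * exp (-hazard φ lam y t) * g (φ t y)

def resolvent (φ : ℝ → Y → Y) (lam g : Y → ℝ) (y : Y) : ℝ :=
  ∫ t in Ioi (0:ℝ), integrand φ lam g y t

variable [TopologicalSpace Y] {φ : ℝ → Y → Y} {lam g : Y → ℝ} {lmin lmax M : ℝ}

theorem continuous_hazard (hφ : Continuous (Function.uncurry φ)) (hlam : Continuous lam) :
    Continuous (Function.uncurry (hazard φ lam)) :=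
  intervalIntegral.continuous_parametric_primitive_of_continuous (f := fun y h => lam (φ h y))
    (hlam.comp (hφ.comp continuous_swap))

theorem continuous_integrand (hφ : Continuous (Function.uncurry φ)) (hlam : Continuous lam)
    (hg : Continuous g) : Continuous (Function.uncurry (integrand φ lam g)) := by
  have hflow : Continuous fun p : Y × ℝ => φ p.2 p.1 := hφ.comp continuous_swap
  exact ((hlam.comp hflow).mul (continuous_hazard hφ hlam).neg.rexp).mul (hg.comp hflow)

theorem hasDerivAt_hazard (hφ : Continuous (Function.uncurry φ)) (hlam : Continuous lam)
    (y : Y) (t : ℝ) : HasDerivAt (hazard φ lam y) (lam (φ t y)) t :=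
  ((hlam.comp (hφ.uncurry_right y)).integral_hasStrictDerivAt 0 t).hasDerivAt

theorem mul_le_hazard (hφ : Continuous (Function.uncurry φ)) (hlam : Continuous lam)
    (hlam_ge : ∀ y, lmin ≤ lam y) (y : Y) {t : ℝ} (ht : 0 ≤ t) :
    lmin * t ≤ hazard φ lam y t := by
  have := intervalIntegral.integral_mono_on ht (intervalIntegrable_const (μ := volume))
    ((hlam.comp (hφ.uncurry_right y)).intervalIntegrable 0 t) fun h _ => hlam_ge (φ h y)
  simpa [hazard, mul_comm] using this

theorem abs_integrand_le (hφ : Continuous (Function.uncurry φ)) (hlam : Continuous lam)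
    (hlam_bd : ∀ y, lmin ≤ lam y ∧ lam y ≤ lmax) (hlmin : 0 ≤ lmin) (hgM : ∀ y, |g y| ≤ M)
    (y : Y) {t : ℝ} (ht : 0 ≤ t) :
    |integrand φ lam g y t| ≤ lmax * M * exp (-lmin * t) := by
  have hlam_abs : |lam (φ t y)| ≤ lmax :=
    abs_le.2 ⟨by linarith [hlam_bd (φ t y)], (hlam_bd _).2⟩
  have hexp : exp (-hazard φ lam y t) ≤ exp (-lmin * t) :=
    exp_le_exp.2 <| neg_mul lmin t ▸
      neg_le_neg (mul_le_hazard hφ hlam (fun y => (hlam_bd y).1) y ht)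
  rw [integrand, abs_mul, abs_mul, abs_exp, mul_right_comm]
  exact mul_le_mul (mul_le_mul hlam_abs (hgM _) (abs_nonneg _) ((abs_nonneg _).trans hlam_abs))
    hexp (exp_pos _).le (mul_nonneg ((abs_nonneg _).trans hlam_abs) ((abs_nonneg _).trans (hgM y)))

theorem integrableOn_integrand (hφ : Continuous (Function.uncurry φ)) (hlam : Continuous lam)
    (hg : Continuous g) (hlam_bd : ∀ y, lmin ≤ lam y ∧ lam y ≤ lmax) (hlmin : 0 < lmin)
    (hgM : ∀ y, |g y| ≤ M) (y : Y) : IntegrableOn (integrand φ lam g y) (Ioi 0) :=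
  Integrable.mono' ((exp_neg_integrableOn_Ioi 0 hlmin).const_mul (lmax * M))
    ((continuous_integrand hφ hlam hg).uncurry_left y).aestronglyMeasurable.restrict
    (ae_restrict_of_forall_mem measurableSet_Ioi fun _ ht =>
      abs_integrand_le hφ hlam hlam_bd hlmin.le hgM y (le_of_lt ht))

theorem abs_resolvent_le (hφ : Continuous (Function.uncurry φ)) (hlam : Continuous lam)
    (hlam_bd : ∀ y, lmin ≤ lam y ∧ lam y ≤ lmax) (hlmin : 0 < lmin)
    (hgM : ∀ y, |g y| ≤ M) (y : Y) : |resolvent φ lam g y| ≤ lmax * M / lmin := by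
  have hbound : IntegrableOn (fun t => lmax * M * exp (-lmin * t)) (Ioi 0) :=
    (exp_neg_integrableOn_Ioi 0 hlmin).const_mul (lmax * M)
  calc |resolvent φ lam g y|
      ≤ ∫ t in Ioi (0:ℝ), lmax * M * exp (-lmin * t) :=
        (Real.norm_eq_abs _).symm.trans_le <| norm_integral_le_of_norm_le hbound <|
          ae_restrict_of_forall_mem measurableSet_Ioi fun _ ht =>
            abs_integrand_le hφ hlam hlam_bd hlmin.le hgM y (le_of_lt ht)
    _ = lmax * M / lmin := by
        rw [integral_const_mul, integral_exp_mul_Ioi (neg_lt_zero.2 hlmin), mul_zero, exp_zero,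
          neg_div_neg_eq, mul_one_div]

theorem continuous_resolvent [FirstCountableTopology Y] (hφ : Continuous (Function.uncurry φ))
    (hlam : Continuous lam) (hg : Continuous g) (hlam_bd : ∀ y, lmin ≤ lam y ∧ lam y ≤ lmax)
    (hlmin : 0 < lmin) (hgM : ∀ y, |g y| ≤ M) : Continuous (resolvent φ lam g) :=
  continuous_of_dominated
    (fun y => ((continuous_integrand hφ hlam hg).uncurry_left y).aestronglyMeasurable.restrict)
    (fun y => ae_restrict_of_forall_mem measurableSet_Ioi fun _ ht =>
      abs_integrand_le hφ hlam hlam_bd hlmin.le hgM y (le_of_lt ht))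
    ((exp_neg_integrableOn_Ioi 0 hlmin).const_mul (lmax * M))
    (ae_of_all _ fun t => (continuous_integrand hφ hlam hg).uncurry_right t)

theorem hazard_flow (hφ : Continuous (Function.uncurry φ)) (hlam : Continuous lam)
    (hadd : ∀ s ≥ (0:ℝ), ∀ t ≥ (0:ℝ), ∀ y, φ (s + t) y = φ s (φ t y)) (y : Y) {s t : ℝ}
    (hs : 0 ≤ s) (ht : 0 ≤ t) :
    hazard φ lam (φ s y) t = hazard φ lam y (t + s) - hazard φ lam y s := by
  have hint : ∀ a b, IntervalIntegrable (fun h => lam (φ h y)) volume a b :=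
    (hlam.comp (hφ.uncurry_right y)).intervalIntegrable
  calc hazard φ lam (φ s y) t = ∫ h in (0:ℝ)..t, lam (φ (h + s) y) := by
        refine intervalIntegral.integral_congr fun h hh => ?_
        rw [uIcc_of_le ht] at hh
        simp only [hadd h hh.1 s hs]
    _ = ∫ h in s..t + s, lam (φ h y) := by
        simpa using
          intervalIntegral.integral_comp_add_right (a := 0) (b := t) (fun h => lam (φ h y)) s
    _ = hazard φ lam y (t + s) - hazard φ lam y s :=
        (intervalIntegral.integral_interval_sub_left (hint 0 _) (hint 0 s)).symm

theorem integrand_flow (hφ : Continuous (Function.uncurry φ)) (hlam : Continuous lam)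
    (hadd : ∀ s ≥ (0:ℝ), ∀ t ≥ (0:ℝ), ∀ y, φ (s + t) y = φ s (φ t y)) (y : Y) {s t : ℝ}
    (hs : 0 ≤ s) (ht : 0 ≤ t) :
    integrand φ lam g (φ s y) t = exp (hazard φ lam y s) * integrand φ lam g y (t + s) := by
  rw [integrand, integrand, hazard_flow hφ hlam hadd y hs ht, ← hadd t ht s hs, neg_sub,
    exp_sub, exp_neg]
  ring

theorem resolvent_flow (hφ : Continuous (Function.uncurry φ)) (hlam : Continuous lam)
    (hg : Continuous g) (hlam_bd : ∀ y, lmin ≤ lam y ∧ lam y ≤ lmax) (hlmin : 0 < lmin)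
    (hgM : ∀ y, |g y| ≤ M) (hadd : ∀ s ≥ (0:ℝ), ∀ t ≥ (0:ℝ), ∀ y, φ (s + t) y = φ s (φ t y))
    (y : Y) {s : ℝ} (hs : 0 ≤ s) :
    resolvent φ lam g (φ s y) =
      exp (hazard φ lam y s) * (resolvent φ lam g y - ∫ t in (0:ℝ)..s, integrand φ lam g y t) := by
  have hshift : ∫ t in Ioi (0:ℝ), integrand φ lam g y (t + s) =
      ∫ t in Ioi s, integrand φ lam g y t := by
    have hpre : (· + s) ⁻¹' Ioi s = Ioi (0:ℝ) := by ext; simp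
    rw [← hpre, (measurePreserving_add_right volume s).setIntegral_preimage_emb
      (measurableEmbedding_addRight s)]
  rw [resolvent, setIntegral_congr_fun measurableSet_Ioi
      fun t ht => integrand_flow hφ hlam hadd y hs (le_of_lt ht),
    integral_const_mul, hshift, ← intervalIntegral.integral_Ioi_sub_Ioi
      (integrableOn_integrand hφ hlam hg hlam_bd hlmin hgM y) hs, resolvent, sub_sub_cancel]

theorem hasDerivWithinAt_resolvent_flow (hφ : Continuous (Function.uncurry φ))
    (hlam : Continuous lam) (hg : Continuous g) (hlam_bd : ∀ y, lmin ≤ lam y ∧ lam y ≤ lmax)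
    (hlmin : 0 < lmin) (hgM : ∀ y, |g y| ≤ M)
    (hadd : ∀ s ≥ (0:ℝ), ∀ t ≥ (0:ℝ), ∀ y, φ (s + t) y = φ s (φ t y)) (y : Y) {s : ℝ}
    (hs : 0 ≤ s) :
    HasDerivWithinAt (fun s => resolvent φ lam g (φ s y))
      (lam (φ s y) * (resolvent φ lam g (φ s y) - g (φ s y))) (Ici 0) s := by
  have hexp : HasDerivAt (fun s => exp (hazard φ lam y s))
      (exp (hazard φ lam y s) * lam (φ s y)) s :=
    (hasDerivAt_hazard hφ hlam y s).exp
  have hremain : HasDerivAt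
      (fun s => resolvent φ lam g y - ∫ t in (0:ℝ)..s, integrand φ lam g y t)
      (-integrand φ lam g y s) s :=
    (((continuous_integrand hφ hlam hg).uncurry_left y).integral_hasStrictDerivAt 0 s).hasDerivAt
      |>.const_sub _
  refine ((hexp.mul hremain).hasDerivWithinAt.congr_of_mem
    (fun r hr => resolvent_flow hφ hlam hg hlam_bd hlmin hgM hadd y hr) hs).congr_deriv ?_
  rw [resolvent_flow hφ hlam hg hlam_bd hlmin hgM hadd y hs, integrand, exp_neg]
  field_simp
  ring

theorem abs_mul_resolvent_sub_le (hφ : Continuous (Function.uncurry φ)) (hlam : Continuous lam)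
    (hlam_bd : ∀ y, lmin ≤ lam y ∧ lam y ≤ lmax) (hlmin : 0 < lmin)
    (hgM : ∀ y, |g y| ≤ M) (y : Y) :
    |lam y * (resolvent φ lam g y - g y)| ≤ lmax * (lmax * M / lmin + M) := by
  have hlam_abs : |lam y| ≤ lmax := abs_le.2 ⟨by linarith [hlam_bd y], (hlam_bd y).2⟩
  rw [abs_mul]
  exact mul_le_mul hlam_abs ((abs_sub _ _).trans (add_le_add
    (abs_resolvent_le hφ hlam hlam_bd hlmin hgM y) (hgM y))) (abs_nonneg _)
    ((abs_nonneg _).trans hlam_abs)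

theorem tendsto_resolvent_flow_slope (hφ : Continuous (Function.uncurry φ))
    (hlam : Continuous lam) (hg : Continuous g) (hlam_bd : ∀ y, lmin ≤ lam y ∧ lam y ≤ lmax)
    (hlmin : 0 < lmin) (hgM : ∀ y, |g y| ≤ M) (hzero : ∀ y, φ 0 y = y)
    (hadd : ∀ s ≥ (0:ℝ), ∀ t ≥ (0:ℝ), ∀ y, φ (s + t) y = φ s (φ t y)) (y : Y) :
    Tendsto (fun T => (resolvent φ lam g (φ T y) - resolvent φ lam g y) / T) (𝓝[>] 0)
      (𝓝 (lam y * (resolvent φ lam g y - g y))) := by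
  have hderiv := hasDerivWithinAt_resolvent_flow hφ hlam hg hlam_bd hlmin hgM hadd y le_rfl
  rw [hzero] at hderiv
  have hslope := (hasDerivWithinAt_iff_tendsto_slope.1 hderiv).mono_left
    (nhdsWithin_mono _ fun T (hT : 0 < T) => ⟨le_of_lt hT, ne_of_gt hT⟩)
  refine hslope.congr fun T => ?_
  rw [slope_def_field, hzero, sub_zero]

theorem abs_resolvent_flow_sub_le (hφ : Continuous (Function.uncurry φ))
    (hlam : Continuous lam) (hg : Continuous g) (hlam_bd : ∀ y, lmin ≤ lam y ∧ lam y ≤ lmax)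
    (hlmin : 0 < lmin) (hgM : ∀ y, |g y| ≤ M) (hzero : ∀ y, φ 0 y = y)
    (hadd : ∀ s ≥ (0:ℝ), ∀ t ≥ (0:ℝ), ∀ y, φ (s + t) y = φ s (φ t y)) (y : Y) {T : ℝ}
    (hT : 0 ≤ T) :
    |resolvent φ lam g (φ T y) - resolvent φ lam g y| ≤ lmax * (lmax * M / lmin + M) * T := by
  have hmvt := norm_image_sub_le_of_norm_deriv_le_segment'
    (f := fun s => resolvent φ lam g (φ s y))
    (fun s hs => (hasDerivWithinAt_resolvent_flow hφ hlam hg hlam_bd hlmin hgM hadd y hs.1).mono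
      Icc_subset_Ici_self)
    (fun s _ => abs_mul_resolvent_sub_le hφ hlam hlam_bd hlmin hgM (φ s y)) T ⟨hT, le_rfl⟩
  simpa [hzero] using hmvt

end SemiflowResolvent

open SemiflowResolvent

theorem gop_eq_resolvent_clampFlow {Y I : Type*} (S : I → ℝ → Y → Y) (lam : Y → ℝ)
    (f : Y × I → ℝ) (y : Y) (i : I) :
    Gop S lam f (y, i) = resolvent (clampFlow (S i)) lam (fun z => f (z, i)) y := by
  refine setIntegral_congr_fun measurableSet_Ioi fun t (ht : 0 < t) => ?_
  have hhazard : cumInt S lam y i t = hazard (clampFlow (S i)) lam y t :=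
    intervalIntegral.integral_congr fun h hh => by
      rw [uIcc_of_le ht.le] at hh
      simp only [clampFlow_of_nonneg hh.1]
  simp only [integrand, hhazard, clampFlow_of_nonneg ht.le]

theorem G_in_domain_AQ_general
    {Y : Type*} [MetricSpace Y]
    {I : Type*} [TopologicalSpace I] [DiscreteTopology I]
    (S : I → ℝ → Y → Y)
    (hS_cont : ∀ i, ContinuousOn (fun p : ℝ × Y => S i p.1 p.2) (Ici (0:ℝ) ×ˢ (univ : Set Y)))
    (hS_zero : ∀ i y, S i 0 y = y)
    (hS_add : ∀ i, ∀ s ≥ (0:ℝ), ∀ t ≥ (0:ℝ), ∀ y, S i (s + t) y = S i s (S i t y))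
    (lam : Y → ℝ) (hlam_cont : Continuous lam) (lmin lmax : ℝ) (hlmin : 0 < lmin)
    (hlam_bd : ∀ y, lmin ≤ lam y ∧ lam y ≤ lmax)
    (f : Y × I → ℝ) (hf_cont : Continuous f) (hf_bdd : ∃ M, ∀ x, |f x| ≤ M) :
    Continuous (Gop S lam f) ∧ (∃ M, ∀ x : Y × I, |Gop S lam f x| ≤ M) ∧
    Continuous (fun x : Y × I => lam x.1 * (Gop S lam f x - f x)) ∧
    (∃ M, ∀ x : Y × I, |lam x.1 * (Gop S lam f x - f x)| ≤ M) ∧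
    (∀ x : Y × I,
      Tendsto (fun T => (Gop S lam f (S x.2 T x.1, x.2) - Gop S lam f x) / T)
        (𝓝[>] (0:ℝ)) (𝓝 (lam x.1 * (Gop S lam f x - f x)))) ∧
    ∃ δ > (0:ℝ), ∃ M, ∀ T ∈ Ioc (0:ℝ) δ, ∀ x : Y × I,
      |(Gop S lam f (S x.2 T x.1, x.2) - Gop S lam f x) / T| ≤ M := by
  obtain ⟨M, hM⟩ := hf_bdd
  have hφ i := continuous_uncurry_clampFlow (hS_cont i)
  have hzero i := clampFlow_zero (hS_zero i)
  have hadd i := clampFlow_add (hS_add i)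
  have hg i : Continuous fun y => f (y, i) := hf_cont.comp (Continuous.prodMk_left i)
  have hgM i y : |f (y, i)| ≤ M := hM (y, i)
  have hflow i y {T : ℝ} (hT : 0 ≤ T) : S i T y = clampFlow (S i) T y := by
    rw [clampFlow_of_nonneg hT]
  have hG_cont : Continuous (Gop S lam f) := continuous_prod_of_discrete_right.2 fun i => by
    simpa only [gop_eq_resolvent_clampFlow] using
      continuous_resolvent (hφ i) hlam_cont (hg i) hlam_bd hlmin (hgM i)
  refine ⟨hG_cont, ⟨lmax * M / lmin, fun ⟨y, i⟩ => ?_⟩,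
    (hlam_cont.comp continuous_fst).mul (hG_cont.sub hf_cont),
    ⟨lmax * (lmax * M / lmin + M), fun ⟨y, i⟩ => ?_⟩, fun ⟨y, i⟩ => ?_,
    1, one_pos, lmax * (lmax * M / lmin + M), fun T hT ⟨y, i⟩ => ?_⟩ <;>
    simp only [gop_eq_resolvent_clampFlow]
  · exact abs_resolvent_le (hφ i) hlam_cont hlam_bd hlmin (hgM i) y
  · exact abs_mul_resolvent_sub_le (hφ i) hlam_cont hlam_bd hlmin (hgM i) y
  · refine (tendsto_resolvent_flow_slope (hφ i) hlam_cont (hg i) hlam_bd hlmin (hgM i) (hzero i)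
      (hadd i) y).congr' ?_
    filter_upwards [self_mem_nhdsWithin] with T (hT : 0 < T)
    rw [hflow i y hT.le]
  · rw [hflow i y hT.1.le, abs_div, abs_of_pos hT.1, div_le_iff₀ hT.1]
    exact abs_resolvent_flow_sub_le (hφ i) hlam_cont (hg i) hlam_bd hlmin (hgM i) (hzero i)
      (hadd i) y hT.1.le

theorem G_in_domain_AQ
    {Y : Type*} [MetricSpace Y] [TopologicalSpace.SeparableSpace Y] [CompleteSpace Y]
    [MeasurableSpace Y] [BorelSpace Y]
    {I : Type*} [Fintype I] [Nonempty I] [TopologicalSpace I] [DiscreteTopology I]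
    [MeasurableSpace I] [MeasurableSingletonClass I]
    (S : I → ℝ → Y → Y)
    (hS_cont : ∀ i, ContinuousOn (fun p : ℝ × Y => S i p.1 p.2) (Ici (0:ℝ) ×ˢ (univ : Set Y)))
    (hS_zero : ∀ i y, S i 0 y = y)
    (hS_add : ∀ i, ∀ s ≥ (0:ℝ), ∀ t ≥ (0:ℝ), ∀ y, S i (s + t) y = S i s (S i t y))
    (lam : Y → ℝ) (hlam_cont : Continuous lam) (lmin lmax : ℝ) (hlmin : 0 < lmin)
    (hlam_bd : ∀ y, lmin ≤ lam y ∧ lam y ≤ lmax)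
    (f : Y × I → ℝ) (hf_cont : Continuous f) (hf_bdd : ∃ M, ∀ x, |f x| ≤ M) :
    Continuous (Gop S lam f) ∧ (∃ M, ∀ x : Y × I, |Gop S lam f x| ≤ M) ∧
    Continuous (fun x : Y × I => lam x.1 * (Gop S lam f x - f x)) ∧
    (∃ M, ∀ x : Y × I, |lam x.1 * (Gop S lam f x - f x)| ≤ M) ∧
    (∀ x : Y × I,
      Tendsto (fun T => (Gop S lam f (S x.2 T x.1, x.2) - Gop S lam f x) / T)
        (𝓝[>] (0:ℝ)) (𝓝 (lam x.1 * (Gop S lam f x - f x)))) ∧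
    ∃ δ > (0:ℝ), ∃ M, ∀ T ∈ Ioc (0:ℝ) δ, ∀ x : Y × I,
      |(Gop S lam f (S x.2 T x.1, x.2) - Gop S lam f x) / T| ≤ M :=
  G_in_domain_AQ_general S hS_cont hS_zero hS_add lam hlam_cont lmin lmax hlmin hlam_bd f hf_cont
    hf_bdd
end
end

section
/- For every x ∈ X, every t ≥ 0 and every n ∈ ℕ₀, the n-step measure of the kernel P̄ started at (x,0) satisfies ∫_{X̄} e^{λ̲ s} 1_{[0,t]}(s) P̄ⁿ((x,0), d(u,j,s)) ≤ (λ̄ t)ⁿ / n!. -/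
open MeasureTheory ProbabilityTheory Real Set Filter Topology

noncomputable section

/-!
Under `P̄` the time coordinate jumps from `s` to `s + τ`, where `τ` has density
`λ(S_i(τ,y)) e^{-Λ(y,i,τ)} ≤ λ̄ e^{-λ̲ τ}` because `Λ(y,i,τ) ≥ λ̲ τ`. The weight `e^{λ̲ r}` exactly
compensates the factor `e^{-λ̲ τ}`, so peeling off the first jump gives by induction on `n`
`∫ e^{λ̲ r} 1_{[0,t]}(r) P̄ⁿ((y,i,s), dr) ≤ 1_{s ≤ t} e^{λ̲ s} (λ̄ (t - s))ⁿ / n!`,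
the inductive step being `∫₀^{t-s} λ̄ (λ̄ (t-s-τ))ⁿ / n! dτ = (λ̄ (t - s))ⁿ⁺¹ / (n+1)!`.
-/

open scoped ENNReal

theorem kIter_succ' {Z : Type*} [MeasurableSpace Z] (κ : Kernel Z Z) (n : ℕ) :
    kIter κ (n + 1) = kIter κ n ∘ₖ κ := by
  induction n with
  | zero => exact (Kernel.comp_id κ).trans (Kernel.id_comp κ).symm
  | succ n ih =>
    change κ ∘ₖ kIter κ (n + 1) = (κ ∘ₖ kIter κ n) ∘ₖ κ
    rw [ih, Kernel.comp_assoc]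

section Orbit

variable {Y I : Type*} [TopologicalSpace Y] {S : I → ℝ → Y → Y} {lam : Y → ℝ}

theorem continuousOn_comp_orbit
    (hS : ∀ i, ContinuousOn (fun p : ℝ × Y => S i p.1 p.2) (Ici (0:ℝ) ×ˢ (univ : Set Y)))
    (hlam : Continuous lam) (i : I) (y : Y) :
    ContinuousOn (fun τ => lam (S i τ y)) (Ici 0) :=
  hlam.comp_continuousOn <|
    (hS i).comp (Continuous.prodMk_left y).continuousOn fun _ hτ => ⟨hτ, mem_univ y⟩

theorem mul_le_cumInt
    (hS : ∀ i, ContinuousOn (fun p : ℝ × Y => S i p.1 p.2) (Ici (0:ℝ) ×ˢ (univ : Set Y)))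
    (hlam : Continuous lam) {a : ℝ} (hlow : ∀ y, a ≤ lam y) (i : I) (y : Y) {τ : ℝ}
    (hτ : 0 ≤ τ) : a * τ ≤ cumInt S lam y i τ := by
  have hint : IntervalIntegrable (fun h => lam (S i h y)) volume 0 τ := by
    refine ContinuousOn.intervalIntegrable ?_
    rw [uIcc_of_le hτ]
    exact (continuousOn_comp_orbit hS hlam i y).mono Icc_subset_Ici_self
  simpa [mul_comm, cumInt] using
    intervalIntegral.integral_mono_on hτ intervalIntegrable_const hint fun h _ => hlow _

theorem jumpDensity_le
    (hS : ∀ i, ContinuousOn (fun p : ℝ × Y => S i p.1 p.2) (Ici (0:ℝ) ×ˢ (univ : Set Y)))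
    (hlam : Continuous lam) {a b : ℝ} (ha : 0 ≤ a) (hbd : ∀ y, a ≤ lam y ∧ lam y ≤ b)
    (i : I) (y : Y) {τ : ℝ} (hτ : 0 ≤ τ) :
    lam (S i τ y) * exp (-cumInt S lam y i τ) ≤ b * exp (-(a * τ)) :=
  mul_le_mul (hbd _).2 (exp_le_exp.2 <| neg_le_neg <|
    mul_le_cumInt hS hlam (fun y => (hbd y).1) i y hτ) (exp_nonneg _)
    (ha.trans ((hbd (S i τ y)).1.trans (hbd _).2))

end Orbit

/-- `b / a` times the law of `s + E` with `E` exponentially distributed with rate `a`. -/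
def expShiftMeasure (a b s : ℝ) : Measure ℝ :=
  ((volume.restrict (Ioi 0)).withDensity fun τ => ENNReal.ofReal (b * exp (-(a * τ)))).map
    (s + ·)

theorem ae_lt_expShiftMeasure (a b s : ℝ) : ∀ᵐ r ∂expShiftMeasure a b s, s < r := by
  rw [expShiftMeasure, ae_map_iff (measurable_const_add s).aemeasurable measurableSet_Ioi]
  refine (withDensity_absolutelyContinuous _ _).ae_le ?_
  filter_upwards [ae_restrict_mem measurableSet_Ioi] with τ hτ
  exact lt_add_of_pos_right s hτ

theorem lintegral_expShiftMeasure (a b s : ℝ) {ψ : ℝ → ℝ≥0∞} (hψ : Measurable ψ) :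
    ∫⁻ r, ψ r ∂expShiftMeasure a b s
      = ∫⁻ τ in Ioi 0, ENNReal.ofReal (b * exp (-(a * τ))) * ψ (s + τ) := by
  rw [expShiftMeasure, lintegral_map hψ (measurable_const_add s)]
  exact lintegral_withDensity_eq_lintegral_mul _ (by fun_prop)
    (hψ.comp (measurable_const_add s))

theorem map_le_expShiftMeasure {Z : Type*} [MeasurableSpace Z] {μ : Measure Z}
    [IsFiniteMeasure μ] {f : Z → ℝ} (hf : Measurable f) {ρ : ℝ → ℝ} {a b s : ℝ} (ha : 0 < a)
    (hρ : ∀ τ, 0 < τ → 0 ≤ ρ τ ∧ ρ τ ≤ b * exp (-(a * τ)))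
    (hμ : ∀ C, MeasurableSet C →
      (μ (f ⁻¹' C)).toReal = ∫ τ in Ioi 0, ρ τ * C.indicator (fun _ => (1:ℝ)) (s + τ)) :
    μ.map f ≤ expShiftMeasure a b s := by
  refine Measure.le_iff.2 fun C hC => ?_
  set g : ℝ → ℝ := fun τ => b * exp (-(a * τ))
  have hC' : MeasurableSet ((s + ·) ⁻¹' C) := measurable_const_add s hC
  have hg : IntegrableOn g (Ioi 0) := by
    have h := (exp_neg_integrableOn_Ioi 0 ha).const_mul b
    simp only [neg_mul] at h
    exact h
  have hg_nonneg : ∀ τ ∈ Ioi (0:ℝ), 0 ≤ g τ := fun τ hτ => (hρ τ hτ).1.trans (hρ τ hτ).2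
  have hle : ∫ τ in Ioi 0, ρ τ * C.indicator (fun _ => (1:ℝ)) (s + τ)
      ≤ ∫ τ in Ioi 0, ((s + ·) ⁻¹' C).indicator g τ := by
    refine integral_mono_of_nonneg ?_ (hg.indicator hC') ?_ <;>
      filter_upwards [ae_restrict_mem measurableSet_Ioi] with τ hτ <;>
      by_cases hτC : s + τ ∈ C <;> simp [g, hτC, (hρ τ hτ).1, (hρ τ hτ).2]
  rw [Measure.map_apply hf hC, expShiftMeasure, Measure.map_apply (measurable_const_add s) hC,
    withDensity_apply _ hC', ← ENNReal.ofReal_toReal (measure_ne_top _ _), hμ C hC]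
  refine (ENNReal.ofReal_le_ofReal hle).trans_eq ?_
  rw [ofReal_integral_eq_lintegral_ofReal (hg.indicator hC') ?_]
  · rw [← lintegral_indicator hC']
    exact lintegral_congr fun τ =>
      (congr_fun (indicator_comp_of_zero (g := ENNReal.ofReal) ENNReal.ofReal_zero) τ).symm
  · filter_upwards [ae_restrict_mem measurableSet_Ioi] with τ hτ
    exact Set.indicator_nonneg (fun _ _ => hg_nonneg τ hτ) τ

section JumpKernel

variable {Y I : Type*} [MeasurableSpace Y] [Fintype I] [MeasurableSpace I]
  {S : I → ℝ → Y → Y} {lam : Y → ℝ} {pm : I → I → Y → ℝ} {J : Kernel Y Y} [IsMarkovKernel J]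
  {Pbar : Kernel (Y × I × ℝ) (Y × I × ℝ)}

theorem measure_time_preimage_toReal (hpm_sum : ∀ i y, ∑ j, pm i j y = 1)
    (hPbar : ∀ y i, ∀ s ≥ (0:ℝ), ∀ A : Set (Y × I × ℝ), MeasurableSet A →
      ((Pbar (y, i, s)) A).toReal =
        ∫ t in Ioi (0:ℝ), lam (S i t y) * exp (-(cumInt S lam y i t)) *
          ∫ u, ∑ j, pm i j u * A.indicator (fun _ => (1:ℝ)) (u, j, s + t) ∂(J (S i t y)))
    (y : Y) (i : I) {s : ℝ} (hs : 0 ≤ s) {C : Set ℝ} (hC : MeasurableSet C) :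
    (Pbar (y, i, s) ((fun w : Y × I × ℝ => w.2.2) ⁻¹' C)).toReal
      = ∫ τ in Ioi 0, lam (S i τ y) * exp (-cumInt S lam y i τ) *
          C.indicator (fun _ => (1:ℝ)) (s + τ) := by
  rw [hPbar y i s hs _ (measurable_snd.snd hC)]
  congr with τ
  have hsum : ∀ u, ∑ j, pm i j u *
      ((fun w : Y × I × ℝ => w.2.2) ⁻¹' C).indicator (fun _ => (1:ℝ)) (u, j, s + τ)
        = C.indicator (fun _ => (1:ℝ)) (s + τ) := fun u => by
    change ∑ j, pm i j u * C.indicator (fun _ => (1:ℝ)) (s + τ) = _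
    rw [← Finset.sum_mul, hpm_sum, one_mul]
  simp [hsum]

theorem map_time_le_expShiftMeasure [TopologicalSpace Y]
    (hS : ∀ i, ContinuousOn (fun p : ℝ × Y => S i p.1 p.2) (Ici (0:ℝ) ×ˢ (univ : Set Y)))
    (hlam : Continuous lam) {a b : ℝ} (ha : 0 < a) (hbd : ∀ y, a ≤ lam y ∧ lam y ≤ b)
    (hpm_sum : ∀ i y, ∑ j, pm i j y = 1) [IsFiniteKernel Pbar]
    (hPbar : ∀ y i, ∀ s ≥ (0:ℝ), ∀ A : Set (Y × I × ℝ), MeasurableSet A →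
      ((Pbar (y, i, s)) A).toReal =
        ∫ t in Ioi (0:ℝ), lam (S i t y) * exp (-(cumInt S lam y i t)) *
          ∫ u, ∑ j, pm i j u * A.indicator (fun _ => (1:ℝ)) (u, j, s + t) ∂(J (S i t y)))
    (y : Y) (i : I) {s : ℝ} (hs : 0 ≤ s) :
    (Pbar (y, i, s)).map (fun w => w.2.2) ≤ expShiftMeasure a b s :=
  map_le_expShiftMeasure measurable_snd.snd ha
    (fun _ hτ => ⟨mul_nonneg (ha.le.trans (hbd _).1) (exp_nonneg _),
      jumpDensity_le hS hlam ha.le hbd i y (le_of_lt hτ)⟩)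
    fun _ hC => measure_time_preimage_toReal hpm_sum hPbar y i hs hC

end JumpKernel

theorem lintegral_Ioc_ofReal_sub_pow {T : ℝ} (hT : 0 ≤ T) (n : ℕ) :
    ∫⁻ τ in Ioc 0 T, ENNReal.ofReal ((T - τ) ^ n) = ENNReal.ofReal (T ^ (n + 1) / (n + 1)) := by
  have hint : IntegrableOn (fun τ => (T - τ) ^ n) (Ioc 0 T) :=
    (by fun_prop : Continuous fun τ : ℝ => (T - τ) ^ n).integrableOn_Icc.mono_set
      Ioc_subset_Icc_self
  have hnonneg : 0 ≤ᵐ[volume.restrict (Ioc 0 T)] fun τ => (T - τ) ^ n := by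
    filter_upwards [ae_restrict_mem measurableSet_Ioc] with τ hτ
    exact pow_nonneg (sub_nonneg.2 hτ.2) n
  rw [← ofReal_integral_eq_lintegral_ofReal hint hnonneg, ← intervalIntegral.integral_of_le hT,
    intervalIntegral.integral_comp_sub_left (fun τ => τ ^ n), integral_pow]
  simp

theorem measurable_exp_mul_indicator_Icc (a t : ℝ) :
    Measurable fun r => exp (a * r) * (Icc 0 t).indicator (fun _ => (1:ℝ)) r :=
  (by fun_prop : Measurable fun r => exp (a * r)).mul
    (measurable_const.indicator measurableSet_Icc)

def expMomentBound (a b t : ℝ) (n : ℕ) (s : ℝ) : ℝ :=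
  (Iic t).indicator (fun s => exp (a * s) * (b * (t - s)) ^ n / n.factorial) s

theorem measurable_expMomentBound (a b t : ℝ) (n : ℕ) : Measurable (expMomentBound a b t n) :=
  (by fun_prop : Measurable fun s => exp (a * s) * (b * (t - s)) ^ n / n.factorial).indicator
    measurableSet_Iic

theorem lintegral_expMomentBound_add {a b : ℝ} (hb : 0 ≤ b) (t : ℝ) (n : ℕ) (s : ℝ) :
    ∫⁻ τ in Ioi 0, ENNReal.ofReal (b * exp (-(a * τ))) *
        ENNReal.ofReal (expMomentBound a b t n (s + τ))
      = ENNReal.ofReal (expMomentBound a b t (n + 1) s) := by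
  rcases lt_or_ge t s with hts | hst
  · have hzero : ∀ τ ∈ Ioi (0:ℝ), ENNReal.ofReal (b * exp (-(a * τ))) *
        ENNReal.ofReal (expMomentBound a b t n (s + τ)) = 0 := fun τ hτ => by
      simp [expMomentBound, indicator_of_notMem (show s + τ ∉ Iic t by simp; linarith [hτ.out])]
    rw [setLIntegral_congr_fun measurableSet_Ioi hzero, lintegral_zero, expMomentBound,
      indicator_of_notMem (show s ∉ Iic t by simpa using hts), ENNReal.ofReal_zero]
  · set c := exp (a * s) * b ^ (n + 1) / n.factorial with hc_def
    have hc : 0 ≤ c := by positivity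
    have hpt : ∀ τ ∈ Ioi (0:ℝ), ENNReal.ofReal (b * exp (-(a * τ))) *
        ENNReal.ofReal (expMomentBound a b t n (s + τ))
          = (Ioc 0 (t - s)).indicator
              (fun τ => ENNReal.ofReal c * ENNReal.ofReal ((t - s - τ) ^ n)) τ := by
      intro τ hτ
      by_cases hτt : τ ≤ t - s
      · rw [indicator_of_mem (show τ ∈ Ioc 0 (t - s) from ⟨hτ, hτt⟩), expMomentBound,
          indicator_of_mem (show s + τ ∈ Iic t by simp; linarith),
          ← ENNReal.ofReal_mul (by positivity), ← ENNReal.ofReal_mul hc]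
        congr 1
        rw [show t - (s + τ) = t - s - τ by ring, mul_add, exp_add, exp_neg, mul_pow, hc_def,
          pow_succ]
        field_simp
      · rw [indicator_of_notMem (fun h => hτt h.2), expMomentBound,
          indicator_of_notMem (show s + τ ∉ Iic t by simp; linarith), ENNReal.ofReal_zero,
          mul_zero]
    rw [setLIntegral_congr_fun measurableSet_Ioi hpt, lintegral_indicator measurableSet_Ioc,
      Measure.restrict_restrict measurableSet_Ioc, inter_eq_left.2 Ioc_subset_Ioi_self,
      lintegral_const_mul' _ _ ENNReal.ofReal_ne_top,
      lintegral_Ioc_ofReal_sub_pow (sub_nonneg.2 hst), ← ENNReal.ofReal_mul hc, expMomentBound,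
      indicator_of_mem (show s ∈ Iic t from hst)]
    congr 1
    rw [hc_def, Nat.factorial_succ, mul_pow]
    push_cast
    field_simp

theorem lintegral_kIter_le_expMomentBound {Z : Type*} [MeasurableSpace Z] {κ : Kernel Z Z}
    {T : Z → ℝ} (hT : Measurable T) {a b : ℝ} (hb : 0 ≤ b)
    (hκ : ∀ z, 0 ≤ T z → (κ z).map T ≤ expShiftMeasure a b (T z)) (t : ℝ) (n : ℕ) {z : Z}
    (hz : 0 ≤ T z) :
    ∫⁻ w, ENNReal.ofReal (exp (a * T w) * (Icc 0 t).indicator (fun _ => (1:ℝ)) (T w))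
        ∂(kIter κ n z)
      ≤ ENNReal.ofReal (expMomentBound a b t n (T z)) := by
  have hF : Measurable fun w =>
      ENNReal.ofReal (exp (a * T w) * (Icc 0 t).indicator (fun _ => (1:ℝ)) (T w)) :=
    (measurable_exp_mul_indicator_Icc a t).ennreal_ofReal.comp hT
  induction n generalizing z with
  | zero =>
    rw [kIter, Kernel.id_apply, lintegral_dirac' _ hF]
    refine ENNReal.ofReal_le_ofReal ?_
    by_cases h : T z ≤ t <;> simp [expMomentBound, h, hz]
  | succ n ih =>
    have hB : Measurable fun r => ENNReal.ofReal (expMomentBound a b t n r) :=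
      (measurable_expMomentBound a b t n).ennreal_ofReal
    have hpos : ∀ᵐ w ∂κ z, 0 ≤ T w :=
      (ae_map_iff hT.aemeasurable measurableSet_Ici).1 <|
        (Measure.absolutelyContinuous_of_le (hκ z hz)).ae_le <| by
          filter_upwards [ae_lt_expShiftMeasure a b (T z)] with r hr using hz.trans hr.le
    calc _ = ∫⁻ w, ∫⁻ v, ENNReal.ofReal (exp (a * T v) *
              (Icc 0 t).indicator (fun _ => (1:ℝ)) (T v)) ∂(kIter κ n w) ∂(κ z) := by
          rw [kIter_succ', Kernel.lintegral_comp _ _ _ hF]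
      _ ≤ ∫⁻ w, ENNReal.ofReal (expMomentBound a b t n (T w)) ∂(κ z) :=
          lintegral_mono_ae (hpos.mono fun w hw => ih hw)
      _ = ∫⁻ r, ENNReal.ofReal (expMomentBound a b t n r) ∂(κ z).map T :=
          (lintegral_map hB hT).symm
      _ ≤ ∫⁻ r, ENNReal.ofReal (expMomentBound a b t n r) ∂expShiftMeasure a b (T z) :=
          lintegral_mono' (hκ z hz) le_rfl
      _ = ENNReal.ofReal (expMomentBound a b t (n + 1) (T z)) := by
          rw [lintegral_expShiftMeasure _ _ _ hB, lintegral_expMomentBound_add hb]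

theorem jump_time_exp_moment_general
    {Y : Type*} [MetricSpace Y] [MeasurableSpace Y]
    {I : Type*} [Fintype I] [MeasurableSpace I]
    (S : I → ℝ → Y → Y)
    (hS_cont : ∀ i, ContinuousOn (fun p : ℝ × Y => S i p.1 p.2) (Ici (0:ℝ) ×ˢ (univ : Set Y)))
    (lam : Y → ℝ) (hlam_cont : Continuous lam) (lmin lmax : ℝ) (hlmin : 0 < lmin)
    (hlam_bd : ∀ y, lmin ≤ lam y ∧ lam y ≤ lmax)
    (pm : I → I → Y → ℝ) (hpm_sum : ∀ i y, ∑ j, pm i j y = 1)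
    (J : Kernel Y Y) [IsMarkovKernel J]
    (Pbar : Kernel (Y × I × ℝ) (Y × I × ℝ)) [IsMarkovKernel Pbar]
    (hPbar : ∀ y i, ∀ s ≥ (0:ℝ), ∀ A : Set (Y × I × ℝ), MeasurableSet A →
      ((Pbar (y, i, s)) A).toReal =
        ∫ t in Ioi (0:ℝ), lam (S i t y) * exp (-(cumInt S lam y i t)) *
          ∫ u, ∑ j, pm i j u * A.indicator (fun _ => (1:ℝ)) (u, j, s + t) ∂(J (S i t y))) :
    ∀ x : Y × I, ∀ t ≥ (0:ℝ), ∀ n : ℕ,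
      ∫ q : Y × I × ℝ, exp (lmin * q.2.2) * (Icc (0:ℝ) t).indicator (fun _ => (1:ℝ)) q.2.2
          ∂(kIter Pbar n (x.1, x.2, 0)) ≤ (lmax * t) ^ n / n.factorial := by
  intro x t ht n
  have hlmax : 0 ≤ lmax := hlmin.le.trans ((hlam_bd x.1).1.trans (hlam_bd x.1).2)
  have hdom : ∀ z : Y × I × ℝ, 0 ≤ z.2.2 →
      (Pbar z).map (fun w => w.2.2) ≤ expShiftMeasure lmin lmax z.2.2 :=
    fun ⟨y, i, _⟩ hs => map_time_le_expShiftMeasure hS_cont hlam_cont hlmin hlam_bd hpm_sum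
      hPbar y i hs
  have hbound := lintegral_kIter_le_expMomentBound measurable_snd.snd hlmax hdom t n
    (z := (x.1, x.2, 0)) le_rfl
  rw [integral_eq_lintegral_of_nonneg_ae (ae_of_all _ fun q =>
      mul_nonneg (exp_nonneg _) (indicator_nonneg (fun _ _ => zero_le_one) _))
    ((measurable_exp_mul_indicator_Icc lmin t).comp measurable_snd.snd).aestronglyMeasurable]
  refine ENNReal.toReal_le_of_le_ofReal (by positivity) (hbound.trans_eq ?_)
  simp [expMomentBound, ht]

theorem jump_time_exp_moment
    {Y : Type*} [MetricSpace Y] [TopologicalSpace.SeparableSpace Y] [CompleteSpace Y]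
    [MeasurableSpace Y] [BorelSpace Y]
    {I : Type*} [Fintype I] [Nonempty I] [TopologicalSpace I] [DiscreteTopology I]
    [MeasurableSpace I] [MeasurableSingletonClass I]
    (S : I → ℝ → Y → Y)
    (hS_cont : ∀ i, ContinuousOn (fun p : ℝ × Y => S i p.1 p.2) (Ici (0:ℝ) ×ˢ (univ : Set Y)))
    (hS_zero : ∀ i y, S i 0 y = y)
    (hS_add : ∀ i, ∀ s ≥ (0:ℝ), ∀ t ≥ (0:ℝ), ∀ y, S i (s + t) y = S i s (S i t y))
    (lam : Y → ℝ) (hlam_cont : Continuous lam) (lmin lmax : ℝ) (hlmin : 0 < lmin)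
    (hlam_bd : ∀ y, lmin ≤ lam y ∧ lam y ≤ lmax)
    (pm : I → I → Y → ℝ) (hpm_cont : ∀ i j, Continuous (pm i j))
    (hpm_mem : ∀ i j y, pm i j y ∈ Icc (0:ℝ) 1) (hpm_sum : ∀ i y, ∑ j, pm i j y = 1)
    (J : Kernel Y Y) [IsMarkovKernel J]
    (Pbar : Kernel (Y × I × ℝ) (Y × I × ℝ)) [IsMarkovKernel Pbar]
    (hPbar : ∀ y i, ∀ s ≥ (0:ℝ), ∀ A : Set (Y × I × ℝ), MeasurableSet A →
      ((Pbar (y, i, s)) A).toReal =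
        ∫ t in Ioi (0:ℝ), lam (S i t y) * exp (-(cumInt S lam y i t)) *
          ∫ u, ∑ j, pm i j u * A.indicator (fun _ => (1:ℝ)) (u, j, s + t) ∂(J (S i t y))) :
    ∀ x : Y × I, ∀ t ≥ (0:ℝ), ∀ n : ℕ,
      ∫ q : Y × I × ℝ, exp (lmin * q.2.2) * (Icc (0:ℝ) t).indicator (fun _ => (1:ℝ)) q.2.2
          ∂(kIter Pbar n (x.1, x.2, 0)) ≤ (lmax * t) ^ n / n.factorial :=
  jump_time_exp_moment_general S hS_cont lam hlam_cont lmin lmax hlmin hlam_bd pm hpm_sum J Pbar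
    hPbar
end
end
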